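/- arXiv:2307.07110 — 3 statements merged into one kernel-verified Lean document; each statement's English description precedes it below -/
import Mathlib

section
/- For the operator A(x,y(λ)) = (-cx, -λ y(λ)) on E = ℝ × L¹(μ), every α > 0 lies in the resolvent set of A, the resolvent is given by R(α,A)(x, y(λ)) = (x/(α+c), y(λ)/(α+λ)), and its operator norm satisfies ‖R(α,A)‖ ≤ 1/α. -/
open MeasureTheory Real Filter

/-- The norm of `E = ℝ × L¹(μ)` at the level of representatives. -/
noncomputable def Enorm (μ : Measure ℝ) (z : ℝ × (ℝ → ℝ)) : ℝ :=
  |z.1| + ∫ l, |z.2 l| ∂μ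

/-- The operator `A(x, y(λ)) = (-c x, -λ y(λ))`, `c = μ((0,∞))`. -/
noncomputable def Agen (μ : Measure ℝ) (z : ℝ × (ℝ → ℝ)) : ℝ × (ℝ → ℝ) :=
  (-(μ Set.univ).toReal * z.1, fun l => -l * z.2 l)

/-- The candidate resolvent `R(α,A)(x, y(λ)) = (x/(α+c), y(λ)/(α+λ))`. -/
noncomputable def Resv (μ : Measure ℝ) (α : ℝ) (z : ℝ × (ℝ → ℝ)) : ℝ × (ℝ → ℝ) :=
  (z.1 / (α + (μ Set.univ).toReal), fun l => z.2 l / (α + l))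

/-!
`A` is multiplication by `-t`, with `t = c` on the first factor and `t = λ ≥ 0` (`μ`-a.e.) on
the second. So `R(α,A)` is multiplication by `1 / (α + t)`, which inverts `α + t` pointwise and
has modulus at most `1 / α`; and `t / (α + t) ≤ 1` puts the image of `R(α,A)` in `D(A)`.
-/

section Scalar

variable {α t : ℝ}

lemma resolvent_right_inverse_scalar (h : α + t ≠ 0) (y : ℝ) :
    α * (y / (α + t)) - -t * (y / (α + t)) - y = 0 := by
  field_simp
  ring

lemma resolvent_left_inverse_scalar (h : α + t ≠ 0) (y : ℝ) :
    (α * y - -t * y) / (α + t) - y = 0 := by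
  field_simp
  ring

lemma abs_div_add_le_abs_div (hα : 0 < α) (ht : 0 ≤ t) (y : ℝ) :
    |y / (α + t)| ≤ |y| / α := by
  rw [abs_div, abs_of_pos (show 0 < α + t by linarith)]
  exact div_le_div_of_nonneg_left (abs_nonneg _) hα (by linarith)

lemma abs_mul_div_add_le_abs (hα : 0 < α) (ht : 0 ≤ t) (y : ℝ) :
    |t * (y / (α + t))| ≤ |y| := by
  have hαt : 0 < α + t := by linarith
  rw [abs_mul, abs_div, abs_of_nonneg ht, abs_of_pos hαt, mul_div_assoc', div_le_iff₀ hαt]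
  nlinarith [abs_nonneg y]

end Scalar

lemma ae_lt_of_measure_Iic_eq_zero {X : Type*} [MeasurableSpace X] [LinearOrder X]
    {μ : Measure X} {a : X} (h : μ (Set.Iic a) = 0) : ∀ᵐ x ∂μ, a < x := by
  filter_upwards [measure_eq_zero_iff_ae_notMem.mp h] with x hx
  simpa using hx

section Multiplier

variable {μ : Measure ℝ} {α : ℝ} {y : ℝ → ℝ}

lemma MeasureTheory.Integrable.div_const_add (hy : Integrable y μ) (hα : 0 < α) (hpos : ∀ᵐ l ∂μ, 0 ≤ l) :
    Integrable (fun l => y l / (α + l)) μ := by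
  refine (hy.div_const α).mono (hy.aemeasurable.div (by fun_prop)).aestronglyMeasurable ?_
  filter_upwards [hpos] with l hl
  simpa only [Real.norm_eq_abs, abs_div (y l) α, abs_of_pos hα] using
    abs_div_add_le_abs_div hα hl (y l)

lemma MeasureTheory.Integrable.mul_div_const_add (hy : Integrable y μ) (hα : 0 < α)
    (hpos : ∀ᵐ l ∂μ, 0 ≤ l) : Integrable (fun l => l * (y l / (α + l))) μ := by
  refine hy.mono (aestronglyMeasurable_id.mul (hy.div_const_add hα hpos).1) ?_
  filter_upwards [hpos] with l hl
  exact abs_mul_div_add_le_abs hα hl (y l)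

lemma integral_abs_div_const_add_le (hy : Integrable y μ) (hα : 0 < α)
    (hpos : ∀ᵐ l ∂μ, 0 ≤ l) : ∫ l, |y l / (α + l)| ∂μ ≤ (∫ l, |y l| ∂μ) / α := by
  rw [← integral_div]
  refine integral_mono_ae (hy.div_const_add hα hpos).abs (hy.abs.div_const α) ?_
  filter_upwards [hpos] with l hl
  exact abs_div_add_le_abs_div hα hl (y l)

lemma Enorm_eq_zero_of_ae {z : ℝ × (ℝ → ℝ)} (h₁ : z.1 = 0) (h₂ : ∀ᵐ l ∂μ, z.2 l = 0) :
    Enorm μ z = 0 := by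
  rw [Enorm, h₁, integral_eq_zero_of_ae (by filter_upwards [h₂] with l hl; simp [hl])]
  simp

lemma Enorm_Resv_le (hα : 0 < α) (hpos : ∀ᵐ l ∂μ, 0 ≤ l) {z : ℝ × (ℝ → ℝ)}
    (hz : Integrable z.2 μ) : Enorm μ (Resv μ α z) ≤ Enorm μ z / α := by
  rw [Enorm, Enorm, add_div]
  exact add_le_add (abs_div_add_le_abs_div hα ENNReal.toReal_nonneg z.1)
    (integral_abs_div_const_add_le hz hα hpos)

lemma Enorm_smul_Resv_sub_Agen_Resv_sub (hα : 0 < α) (hpos : ∀ᵐ l ∂μ, 0 ≤ l)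
    (z : ℝ × (ℝ → ℝ)) : Enorm μ ((α • Resv μ α z - Agen μ (Resv μ α z)) - z) = 0 := by
  refine Enorm_eq_zero_of_ae ?_ ?_
  · exact resolvent_right_inverse_scalar (by positivity) z.1
  · filter_upwards [hpos] with l hl
    exact resolvent_right_inverse_scalar (add_pos_of_pos_of_nonneg hα hl).ne' (z.2 l)

lemma Enorm_Resv_smul_sub_Agen_sub (hα : 0 < α) (hpos : ∀ᵐ l ∂μ, 0 ≤ l)
    (z : ℝ × (ℝ → ℝ)) : Enorm μ (Resv μ α (α • z - Agen μ z) - z) = 0 := by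
  refine Enorm_eq_zero_of_ae ?_ ?_
  · exact resolvent_left_inverse_scalar (by positivity) z.1
  · filter_upwards [hpos] with l hl
    exact resolvent_left_inverse_scalar (add_pos_of_pos_of_nonneg hα hl).ne' (z.2 l)

end Multiplier

theorem seedbank_resolvent_general
    (μ : Measure ℝ) (hsupp : μ (Set.Iic 0) = 0)
    (α : ℝ) (hα : 0 < α) :
    (∀ z : ℝ × (ℝ → ℝ), Integrable z.2 μ →
      Integrable ((Resv μ α z).2) μ ∧
      Integrable (fun l => l * (Resv μ α z).2 l) μ ∧
      Enorm μ ((α • Resv μ α z - Agen μ (Resv μ α z)) - z) = 0 ∧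
      Enorm μ (Resv μ α z) ≤ Enorm μ z / α) ∧
    (∀ z : ℝ × (ℝ → ℝ), Integrable z.2 μ → Integrable (fun l => l * z.2 l) μ →
      Enorm μ (Resv μ α (α • z - Agen μ z) - z) = 0) := by
  have hpos : ∀ᵐ l ∂μ, 0 ≤ l := (ae_lt_of_measure_Iic_eq_zero hsupp).mono fun _ => le_of_lt
  exact ⟨fun z hz => ⟨hz.div_const_add hα hpos, hz.mul_div_const_add hα hpos,
      Enorm_smul_Resv_sub_Agen_Resv_sub hα hpos z, Enorm_Resv_le hα hpos hz⟩,
    fun z _ _ => Enorm_Resv_smul_sub_Agen_sub hα hpos z⟩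

/-- For `A(x,y(λ)) = (-cx, -λy(λ))` on `E = ℝ × L¹(μ)`, every
`α > 0` lies in the resolvent set of `A`: `R(α,A)(x,y(λ)) = (x/(α+c), y(λ)/(α+λ))`
maps `E` into `D(A)`, is a two-sided inverse of `α - A` (in the norm of `E`), and
satisfies `‖R(α,A)‖ ≤ 1/α`. -/
theorem seedbank_resolvent
    (μ : Measure ℝ) [IsFiniteMeasure μ] (hsupp : μ (Set.Iic 0) = 0)
    (α : ℝ) (hα : 0 < α) :
    (∀ z : ℝ × (ℝ → ℝ), Integrable z.2 μ →
      Integrable ((Resv μ α z).2) μ ∧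
      Integrable (fun l => l * (Resv μ α z).2 l) μ ∧
      Enorm μ ((α • Resv μ α z - Agen μ (Resv μ α z)) - z) = 0 ∧
      Enorm μ (Resv μ α z) ≤ Enorm μ z / α) ∧
    (∀ z : ℝ × (ℝ → ℝ), Integrable z.2 μ → Integrable (fun l => l * z.2 l) μ →
      Enorm μ (Resv μ α (α • z - Agen μ z) - z) = 0) :=
  seedbank_resolvent_general μ hsupp α hα
end

section
/- Let μ be a nonzero non-atomic finite Borel measure on (0,∞) and t > 0. Then the multiplication operator M_t : L¹(μ) → L¹(μ), (M_t y)(λ) = e^{-λ t} y(λ), is not compact: there exists ε > 0 and a sequence {f_n} in the closed unit ball of L¹(μ) with ‖M_t f_m - M_t f_n‖_{L¹} ≥ ε for all m ≠ n. -/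
open MeasureTheory Real
open scoped ENNReal

/-- Let `μ` be a nonzero non-atomic finite Borel measure on
`(0,∞)` and `t > 0`.  Then the multiplication operator
`M_t : L¹(μ) → L¹(μ)`, `(M_t y)(λ) = e^{-λ t} y(λ)`, is not compact: there exist
`ε > 0` and a sequence `{f_n}` in the closed unit ball of `L¹(μ)` whose images are
`ε`-separated in `L¹`. -/
theorem exp_multiplication_not_compact_nonatomic
    (μ : Measure ℝ) [IsFiniteMeasure μ] [NullSingletonClass μ] (hμ : μ ≠ 0)
    (hsupp : μ (Set.Iic 0) = 0) (t : ℝ) (ht : 0 < t) :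
    ∃ ε > (0 : ℝ), ∃ f : ℕ → ℝ → ℝ,
      (∀ n, Integrable (f n) μ ∧ ∫ l, |f n l| ∂μ ≤ 1) ∧
      ∀ m n, m ≠ n →
        ε ≤ ∫ l, |Real.exp (-l * t) * f m l - Real.exp (-l * t) * f n l| ∂μ := by
  -- find N with μ (Ioc 0 N) > 0
  have hpos : ∃ N : ℕ, 0 < μ (Set.Ioc 0 (N : ℝ)) := by
    by_contra h
    push_neg at h
    have h0 : ∀ N : ℕ, μ (Set.Ioc 0 (N : ℝ)) = 0 := fun N => le_antisymm (h N) zero_le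
    have hIoi : μ (Set.Ioi (0 : ℝ)) = 0 := by
      have hsub : Set.Ioi (0 : ℝ) ⊆ ⋃ N : ℕ, Set.Ioc 0 (N : ℝ) := by
        intro x hx
        obtain ⟨N, hNx⟩ := exists_nat_ge x
        exact Set.mem_iUnion.2 ⟨N, hx, hNx⟩
      exact measure_mono_null hsub (measure_iUnion_null h0)
    apply hμ
    have huniv : μ Set.univ = 0 := by
      rw [← Set.Iic_union_Ioi (a := (0:ℝ))]
      exact measure_union_null hsupp hIoi
    exact Measure.measure_univ_eq_zero.mp huniv
  obtain ⟨N, hN⟩ := hpos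
  set S : Set ℝ := {x : ℝ | 0 < μ (Set.Ioc 0 x)} with hS
  have hNS : (N : ℝ) ∈ S := hN
  have hSne : S.Nonempty := ⟨_, hNS⟩
  have hSpos : ∀ x ∈ S, (0:ℝ) < x := by
    intro x hx
    by_contra hx0
    push_neg at hx0
    have : Set.Ioc (0:ℝ) x = ∅ := Set.Ioc_eq_empty (by exact not_lt.2 hx0)
    rw [hS] at hx
    simp only [Set.mem_setOf_eq, this, measure_empty] at hx
    exact lt_irrefl _ hx
  have hbdd : BddBelow S := ⟨0, fun x hx => (hSpos x hx).le⟩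
  set c : ℝ := sInf S with hc
  have hc0 : 0 ≤ c := le_csInf hSne fun x hx => (hSpos x hx).le
  have hcx : ∀ x ∈ S, c ≤ x := fun x hx => csInf_le hbdd hx
  -- below c the measure of Ioc 0 x vanishes
  have hFlt : ∀ x : ℝ, x < c → μ (Set.Ioc 0 x) = 0 := by
    intro x hx
    by_contra h
    have : x ∈ S := pos_iff_ne_zero.2 h
    exact absurd (hcx x this) (not_le.2 hx)
  -- μ (Ioc 0 c) = 0
  have hFc : μ (Set.Ioc 0 c) = 0 := by
    rcases eq_or_lt_of_le hc0 with h0 | h0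
    · rw [← h0]; simp
    · have hcov : Set.Ioo (0:ℝ) c ⊆ ⋃ n : ℕ, Set.Ioc 0 (c - 1/(n+1)) := by
        intro x hx
        obtain ⟨n, hn⟩ := exists_nat_one_div_lt (sub_pos.2 hx.2)
        exact Set.mem_iUnion.2 ⟨n, hx.1, by push_cast; linarith [hn]⟩
      have hoo : μ (Set.Ioo (0:ℝ) c) = 0 := by
        refine measure_mono_null hcov (measure_iUnion_null fun n => hFlt _ ?_)
        have : (0:ℝ) < 1/(n+1) := by positivity
        linarith
      have : Set.Ioc (0:ℝ) c ⊆ Set.Ioo 0 c ∪ {c} := by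
        intro x hx
        rcases eq_or_lt_of_le hx.2 with h | h
        · exact Or.inr (by simp [h])
        · exact Or.inl ⟨hx.1, h⟩
      exact measure_mono_null this (measure_union_null hoo (measure_singleton c))
  -- positivity to the right of c
  have hGpos : ∀ y : ℝ, c < y → 0 < μ (Set.Ioc c y) := by
    intro y hy
    obtain ⟨x, hxS, hxy⟩ := exists_lt_of_csInf_lt hSne hy
    have hcxx : c ≤ x := hcx x hxS
    have hcxlt : c < x := by
      rcases eq_or_lt_of_le hcxx with h | h
      · exfalso; rw [← h] at hxS
        simp only [hS, Set.mem_setOf_eq, hFc] at hxS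
        exact lt_irrefl _ hxS
      · exact h
    have hsplit : Set.Ioc (0:ℝ) x ⊆ Set.Ioc 0 c ∪ Set.Ioc c y := by
      intro z hz
      rcases le_or_gt z c with h | h
      · exact Or.inl ⟨hz.1, h⟩
      · exact Or.inr ⟨h, hz.2.trans hxy.le⟩
    calc (0:ℝ≥0∞) < μ (Set.Ioc 0 x) := hxS
      _ ≤ μ (Set.Ioc 0 c ∪ Set.Ioc c y) := measure_mono hsplit
      _ ≤ μ (Set.Ioc 0 c) + μ (Set.Ioc c y) := measure_union_le _ _
      _ = μ (Set.Ioc c y) := by rw [hFc, zero_add]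
  -- c < N
  have hcN : c < (N : ℝ) := by
    rcases lt_or_ge c (N:ℝ) with h | h
    · exact h
    · exfalso
      have : μ (Set.Ioc (0:ℝ) N) = 0 :=
        measure_mono_null (Set.Ioc_subset_Ioc le_rfl h) hFc
      rw [this] at hN; exact lt_irrefl _ hN
  -- right limit: small sets of positive measure just right of c
  have hlim : ∀ y : ℝ, c < y → ∃ z : ℝ, c < z ∧ z ≤ y ∧
      μ (Set.Ioc c z) ≤ μ (Set.Ioc c y) / 2 := by
    intro y hy
    have hεpos : 0 < μ (Set.Ioc c y) / 2 :=
      ENNReal.div_pos (hGpos y hy).ne' (by norm_num)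
    have hanti : Antitone (fun n : ℕ => Set.Ioc c (c + 1/(n+1))) := by
      intro n m hnm
      apply Set.Ioc_subset_Ioc le_rfl
      have : (1:ℝ)/(m+1) ≤ 1/(n+1) := by
        apply one_div_le_one_div_of_le (by positivity)
        have := (Nat.cast_le (α := ℝ)).2 hnm; linarith
      linarith
    have hiInter : (⋂ n : ℕ, Set.Ioc c (c + 1/(n+1))) = ∅ := by
      ext x
      simp only [Set.mem_iInter, Set.mem_Ioc, Set.mem_empty_iff_false, iff_false]
      intro hall
      have hx : c < x := (hall 0).1
      obtain ⟨n, hn⟩ := exists_nat_one_div_lt (sub_pos.2 hx)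
      have h2 := (hall n).2
      linarith
    have htend : Filter.Tendsto (fun n : ℕ => μ (Set.Ioc c (c + 1/(n+1)))) Filter.atTop
        (nhds 0) := by
      have := tendsto_measure_iInter_atTop (μ := μ)
        (s := fun n : ℕ => Set.Ioc c (c + 1/(n+1)))
        (fun n => measurableSet_Ioc.nullMeasurableSet) hanti
        ⟨0, measure_ne_top μ _⟩
      rwa [hiInter, measure_empty] at this
    have hev := htend.eventually_lt_const hεpos
    obtain ⟨n, hn⟩ := hev.exists
    refine ⟨min (c + 1/(n+1)) y, lt_min (lt_add_of_pos_right c (by positivity)) hy, min_le_right _ _, ?_⟩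
    calc μ (Set.Ioc c (min (c + 1/(n+1)) y))
        ≤ μ (Set.Ioc c (c + 1/(n+1))) :=
          measure_mono (Set.Ioc_subset_Ioc le_rfl (min_le_left _ _))
      _ ≤ μ (Set.Ioc c y) / 2 := hn.le
  -- build the decreasing sequence of right endpoints
  set T := {y : ℝ // c < y ∧ y ≤ (N:ℝ)} with hT
  have hstep : ∀ p : T, ∃ q : T, q.1 ≤ p.1 ∧
      μ (Set.Ioc c q.1) ≤ μ (Set.Ioc c p.1) / 2 := by
    rintro ⟨y, hy1, hy2⟩
    obtain ⟨z, hz1, hz2, hz3⟩ := hlim y hy1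
    exact ⟨⟨z, hz1, hz2.trans hy2⟩, hz2, hz3⟩
  choose g hg1 hg2 using hstep
  set Y : ℕ → T := fun n => g^[n] ⟨(N:ℝ), hcN, le_rfl⟩ with hY
  have hYsucc : ∀ n, Y (n+1) = g (Y n) := by
    intro n; rw [hY]; simp [Function.iterate_succ_apply']
  set y : ℕ → ℝ := fun n => (Y n).1 with hy
  set M : ℕ → Set ℝ := fun n => Set.Ioc c (y n) with hM
  have hyanti : Antitone y := by
    apply antitone_nat_of_succ_le
    intro n
    rw [hy]; simp only [hYsucc n]; exact hg1 (Y n)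
  have hMsub : ∀ m n : ℕ, m ≤ n → M n ⊆ M m :=
    fun m n h => Set.Ioc_subset_Ioc le_rfl (hyanti h)
  have hhalf : ∀ m n : ℕ, m < n → μ (M n) ≤ μ (M m) / 2 := by
    intro m n h
    calc μ (M n) ≤ μ (M (m+1)) := measure_mono (hMsub _ _ h)
      _ = μ (Set.Ioc c (g (Y m)).1) := by rw [hM, hy]; simp [hYsucc m]
      _ ≤ μ (Set.Ioc c (Y m).1) / 2 := hg2 (Y m)
      _ = μ (M m) / 2 := rfl
  have hMpos : ∀ n, 0 < μ (M n) := fun n => hGpos _ (Y n).2.1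
  have hMfin : ∀ n, μ (M n) ≠ ∞ := fun n => measure_ne_top μ _
  set a : ℕ → ℝ := fun n => (μ (M n)).toReal with ha
  have hapos : ∀ n, 0 < a n := fun n => ENNReal.toReal_pos (hMpos n).ne' (hMfin n)
  have hahalf : ∀ m n : ℕ, m < n → a n ≤ a m / 2 := by
    intro m n h
    have := ENNReal.toReal_mono (ENNReal.div_lt_top (hMfin m) (by norm_num)).ne (hhalf m n h)
    rwa [ENNReal.toReal_div, ENNReal.toReal_ofNat] at this
  -- the functions
  set f : ℕ → ℝ → ℝ := fun n => (M n).indicator (fun _ => (a n)⁻¹) with hf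
  have hfint : ∀ n, Integrable (f n) μ := by
    intro n
    rw [hf]
    exact (integrable_indicator_iff measurableSet_Ioc).2
      (integrableOn_const (measure_ne_top μ _))
  have hfabs : ∀ n, (fun l => |f n l|) = f n := by
    intro n; funext l
    by_cases h : l ∈ M n
    · simp [hf, Set.indicator_of_mem h, abs_of_nonneg (inv_nonneg.2 (hapos n).le)]
    · simp [hf, Set.indicator_of_notMem h]
  have hfnorm : ∀ n, ∫ l, |f n l| ∂μ = 1 := by
    intro n
    rw [hfabs n, hf]
    rw [integral_indicator_const _ measurableSet_Ioc, smul_eq_mul]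
    show a n * (a n)⁻¹ = 1
    exact mul_inv_cancel₀ (hapos n).ne'
  have hyN : ∀ n, y n ≤ (N:ℝ) := fun n => (Y n).2.2
  -- integrability of the weighted functions
  have hwint : ∀ n, Integrable (fun l => Real.exp (-l * t) * f n l) μ := by
    intro n
    have heq : (fun l => Real.exp (-l * t) * f n l)
        = (M n).indicator (fun l => Real.exp (-l * t) * (a n)⁻¹) := by
      funext l
      by_cases h : l ∈ M n
      · simp [hf, Set.indicator_of_mem h]
      · simp [hf, Set.indicator_of_notMem h]
    rw [heq]
    apply (integrable_indicator_iff measurableSet_Ioc).2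
    apply Measure.integrableOn_of_bounded (M := (a n)⁻¹) (measure_ne_top μ _)
      ((Continuous.mul (by fun_prop) continuous_const).aestronglyMeasurable)
    filter_upwards [ae_restrict_mem measurableSet_Ioc] with x hx
    have hx0 : 0 ≤ x := hc0.trans hx.1.le
    have hexp1 : Real.exp (-x * t) ≤ 1 := Real.exp_le_one_iff.2 (by nlinarith)
    rw [Pi.mul_apply, Real.norm_eq_abs, abs_mul, abs_of_pos (Real.exp_pos _),
      abs_of_nonneg (inv_nonneg.2 (hapos n).le)]
    nlinarith [Real.exp_pos (-x * t), inv_nonneg.2 (hapos n).le]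
  -- the key separation estimate
  have key : ∀ m n : ℕ, m < n →
      Real.exp (-(N:ℝ) * t) / 2 ≤
        ∫ l, |Real.exp (-l * t) * f m l - Real.exp (-l * t) * f n l| ∂μ := by
    intro m n hmn
    have hint : Integrable
        (fun l => |Real.exp (-l * t) * f m l - Real.exp (-l * t) * f n l|) μ :=
      ((hwint m).sub (hwint n)).abs
    have h1 : ∫ l in M n, |Real.exp (-l * t) * f m l - Real.exp (-l * t) * f n l| ∂μ
        ≤ ∫ l, |Real.exp (-l * t) * f m l - Real.exp (-l * t) * f n l| ∂μ :=
      setIntegral_le_integral hint (Filter.Eventually.of_forall fun l => abs_nonneg _)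
    have hinv : (a m)⁻¹ ≤ (a n)⁻¹ / 2 := by
      have h2 : (a m)⁻¹ ≤ (2 * a n)⁻¹ :=
        inv_anti₀ (by linarith [hapos n]) (by linarith [hahalf m n hmn])
      rw [mul_inv] at h2
      have h3 : (0:ℝ) ≤ (a n)⁻¹ := inv_nonneg.2 (hapos n).le
      linarith
    have h2 : Real.exp (-(N:ℝ) * t) * ((a n)⁻¹ / 2) * (μ (M n)).toReal
        ≤ ∫ l in M n, |Real.exp (-l * t) * f m l - Real.exp (-l * t) * f n l| ∂μ := by
      rw [mul_comm, ← smul_eq_mul]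
      apply setIntegral_ge_of_const_le measurableSet_Ioc (hMfin n) ?_ hint.integrableOn
      intro x hx
      have hxm : x ∈ M m := hMsub m n hmn.le hx
      have hfm : f m x = (a m)⁻¹ := by simp [hf, Set.indicator_of_mem hxm]
      have hfn : f n x = (a n)⁻¹ := by simp [hf, Set.indicator_of_mem (show x ∈ M n from hx)]
      rw [hfm, hfn]
      have hx0 : 0 ≤ x := hc0.trans hx.1.le
      have hxN : x ≤ (N:ℝ) := hx.2.trans (hyN n)
      have hexp : Real.exp (-(N:ℝ) * t) ≤ Real.exp (-x * t) :=
        Real.exp_le_exp.2 (by nlinarith)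
      have hn0 : (0:ℝ) ≤ (a n)⁻¹ := inv_nonneg.2 (hapos n).le
      have habs : |Real.exp (-x * t) * (a m)⁻¹ - Real.exp (-x * t) * (a n)⁻¹|
          = Real.exp (-x * t) * ((a n)⁻¹ - (a m)⁻¹) := by
        rw [← mul_sub, abs_mul, abs_of_pos (Real.exp_pos _), abs_sub_comm,
          abs_of_nonneg (by linarith)]
      rw [habs]
      apply mul_le_mul hexp (by linarith) (by linarith) (Real.exp_pos _).le
    have h3 : Real.exp (-(N:ℝ) * t) * ((a n)⁻¹ / 2) * (μ (M n)).toReal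
        = Real.exp (-(N:ℝ) * t) / 2 := by
      show Real.exp (-(N:ℝ) * t) * ((a n)⁻¹ / 2) * a n = Real.exp (-(N:ℝ) * t) / 2
      field_simp [(hapos n).ne']
    rw [h3] at h2
    exact h2.trans h1
  refine ⟨Real.exp (-(N:ℝ) * t) / 2, by positivity, f,
    fun n => ⟨hfint n, (hfnorm n).le⟩, ?_⟩
  intro m n hmn
  rcases hmn.lt_or_gt with h | h
  · exact key m n h
  · have h2 := key n m h
    have heq : ∫ l, |Real.exp (-l * t) * f m l - Real.exp (-l * t) * f n l| ∂μ
        = ∫ l, |Real.exp (-l * t) * f n l - Real.exp (-l * t) * f m l| ∂μ :=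
      integral_congr_ae (Filter.Eventually.of_forall fun l => abs_sub_comm _ _)
    rw [heq]
    exact h2
end

section
/- Let μ be a nonzero non-atomic finite Borel measure on (0,∞). Then the set D = [0,1] × {y ∈ L¹(μ) : 0 ≤ y ≤ 1 μ-a.e.} is not locally compact in the norm topology of ℝ × L¹(μ): the point (0,0) has no compact neighborhood in D. -/
open MeasureTheory Set
open scoped ENNReal

section Aux

variable {μ : Measure ℝ} [IsFiniteMeasure μ] [NullSingletonClass μ]

lemma aux_iUnion_Iic (z : ℝ) : (⋃ n : ℕ, Iic (z - 1/(n+1))) = Iio z := by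
  ext x
  simp only [mem_iUnion, mem_Iic, mem_Iio]
  constructor
  · rintro ⟨n, hn⟩
    have h : (0:ℝ) < 1/(n+1) := by positivity
    linarith
  · intro hx
    obtain ⟨n, hn⟩ := exists_nat_one_div_lt (sub_pos.mpr hx)
    exact ⟨n, by linarith⟩

lemma aux_iInter_Iic (z : ℝ) : (⋂ n : ℕ, Iic (z + 1/(n+1))) = Iic z := by
  ext x
  simp only [mem_iInter, mem_Iic]
  constructor
  · intro hx
    refine le_of_forall_pos_le_add fun ε hε => ?_
    obtain ⟨n, hn⟩ := exists_nat_one_div_lt hε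
    have := hx n
    linarith
  · intro hx n
    have h : (0:ℝ) < 1/(n+1) := by positivity
    linarith

omit [IsFiniteMeasure μ] [NullSingletonClass μ] in
lemma aux_bddAbove {w : ℝ≥0∞} (hw : w < μ univ) :
    BddAbove {x : ℝ | μ (Iic x) ≤ w} := by
  obtain ⟨T, hT⟩ : ∃ T : ℝ, w < μ (Iic T) := by
    by_contra hcon
    push_neg at hcon
    have huniv : (univ : Set ℝ) = ⋃ n : ℕ, Iic (n : ℝ) := by
      ext x
      simp only [mem_univ, mem_iUnion, mem_Iic, true_iff]
      exact (exists_nat_ge x).imp fun n hn => hn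
    have hle : μ univ ≤ w := by
      rw [huniv, Monotone.measure_iUnion (fun a b hab => Iic_subset_Iic.2 (by exact_mod_cast hab))]
      exact iSup_le fun n => hcon n
    exact hw.not_ge hle
  refine ⟨T, fun x hx => ?_⟩
  by_contra hxT
  push_neg at hxT
  exact ((le_trans (measure_mono (Iic_subset_Iic.2 hxT.le)) hx).trans_lt hT).false

lemma aux_measure_Iio_sSup (hsupp : μ (Iic 0) = 0) {w : ℝ≥0∞} (hw : w < μ univ) :
    μ (Iio (sSup {x : ℝ | μ (Iic x) ≤ w})) = w := by
  set S := {x : ℝ | μ (Iic x) ≤ w} with hS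
  have h0S : (0:ℝ) ∈ S := by simp [hS, hsupp]
  have hbdd : BddAbove S := aux_bddAbove hw
  set z := sSup S with hz
  have hle : μ (Iio z) ≤ w := by
    rw [← aux_iUnion_Iic z,
      Monotone.measure_iUnion (fun a b hab => Iic_subset_Iic.2 (by
        have : (1:ℝ)/(b+1) ≤ 1/(a+1) := by
          apply one_div_le_one_div_of_le (by positivity)
          exact_mod_cast add_le_add_left (by exact_mod_cast hab : (a:ℝ) ≤ b) 1
        linarith))]
    refine iSup_le fun n => ?_
    have hlt : z - 1/(n+1) < z := by
      have h : (0:ℝ) < 1/(n+1) := by positivity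
      linarith
    obtain ⟨y, hyS, hy⟩ := exists_lt_of_lt_csSup ⟨0, h0S⟩ hlt
    exact le_trans (measure_mono (Iic_subset_Iic.2 hy.le)) hyS
  have hge : w ≤ μ (Iic z) := by
    rw [← aux_iInter_Iic z]
    rw [Directed.measure_iInter (fun n => measurableSet_Iic.nullMeasurableSet)
      (by
        apply Antitone.directed_ge
        intro a b hab
        apply Iic_subset_Iic.2
        have : (1:ℝ)/(b+1) ≤ 1/(a+1) := by
          apply one_div_le_one_div_of_le (by positivity)
          exact_mod_cast add_le_add_left (by exact_mod_cast hab : (a:ℝ) ≤ b) 1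
        linarith)
      ⟨0, measure_ne_top μ _⟩]
    refine le_iInf fun n => ?_
    have hnot : z + 1/(n+1) ∉ S := by
      intro hmem
      have h1 := le_csSup hbdd hmem
      have h : (0:ℝ) < 1/(n+1) := by positivity
      rw [← hz] at h1
      linarith
    exact (not_le.1 hnot).le
  have heq : μ (Iic z) = μ (Iio z) := (measure_congr (Iio_ae_eq_Iic (a := z))).symm
  exact le_antisymm hle (heq ▸ hge)

end Aux

lemma aux_card_filter_ne (N : ℕ) (i j : Fin N) (hij : i ≠ j) :
    (Finset.univ.filter (fun v : Fin N → Bool => v i ≠ v j)).card * 2 = 2 ^ N := by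
  classical
  have hcard : (Finset.univ.filter (fun v : Fin N → Bool => v i ≠ v j)).card
      = (Finset.univ.filter (fun v : Fin N → Bool => ¬ v i ≠ v j)).card := by
    apply Finset.card_bij' (fun v _ => Function.update v j (!(v j)))
      (fun v _ => Function.update v j (!(v j)))
    · intro v _
      funext x
      by_cases hx : x = j
      · subst hx; simp
      · simp [Function.update_of_ne hx]
    · intro v _
      funext x
      by_cases hx : x = j
      · subst hx; simp
      · simp [Function.update_of_ne hx]
    · intro v hv
      simp only [Finset.mem_filter, Finset.mem_univ, true_and] at hv ⊢
      rw [Function.update_of_ne hij, Function.update_self]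
      revert hv
      cases v i <;> cases v j <;> simp
    · intro v hv
      simp only [Finset.mem_filter, Finset.mem_univ, true_and] at hv ⊢
      rw [Function.update_of_ne hij, Function.update_self]
      revert hv
      cases v i <;> cases v j <;> simp
  have htot := Finset.card_filter_add_card_filter_not
    (s := (Finset.univ : Finset (Fin N → Bool))) (p := fun v => v i ≠ v j)
  rw [← hcard] at htot
  have hN : (Finset.univ : Finset (Fin N → Bool)).card = 2 ^ N := by
    simp [Finset.card_univ]
  rw [hN] at htot
  rw [mul_two]
  exact htot

/-- The state space `D = [0,1] × {y ∈ L¹(μ) : 0 ≤ y ≤ 1 μ-a.e.}`. -/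
def Dset (μ : Measure ℝ) : Set (ℝ × Lp ℝ 1 μ) :=
  {z | z.1 ∈ Set.Icc (0 : ℝ) 1 ∧ ∀ᵐ l ∂μ, 0 ≤ (z.2 : ℝ → ℝ) l ∧ (z.2 : ℝ → ℝ) l ≤ 1}

/-- Let `μ` be a nonzero non-atomic finite Borel measure on
`(0,∞)`.  Then `D` is not locally compact in the norm topology of `ℝ × L¹(μ)`:
the point `(0,0)` has no compact neighborhood in `D` (i.e. there is no compact set
contained in `D` which is a neighborhood of `(0,0)` in the subspace topology). -/
theorem Dset_not_locally_compact_nonatomic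
    (μ : Measure ℝ) [IsFiniteMeasure μ] [NullSingletonClass μ] (hμ : μ ≠ 0)
    (hsupp : μ (Set.Iic 0) = 0) :
    ¬ ∃ s : Set (ℝ × Lp ℝ 1 μ), IsCompact s ∧ s ⊆ Dset μ ∧
        s ∈ nhdsWithin ((0 : ℝ), (0 : Lp ℝ 1 μ)) (Dset μ) := by
  classical
  rintro ⟨s, hscomp, hsD, hsnh⟩
  have hMtop : μ univ ≠ ∞ := measure_ne_top μ _
  set Mr : ℝ := (μ univ).toReal with hMr_def
  have hMr : 0 < Mr :=
    ENNReal.toReal_pos (fun h0 => hμ (Measure.measure_univ_eq_zero.mp h0)) hMtop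
  obtain ⟨δ, hδ0, hball⟩ := Metric.mem_nhdsWithin_iff.mp hsnh
  set h : ℝ := min 1 (δ / (2 * Mr)) with hh_def
  have hh0 : 0 < h := lt_min one_pos (by positivity)
  have hh1 : h ≤ 1 := min_le_left _ _
  have hhMr : h * Mr ≤ δ / 2 := by
    have h2 : h ≤ δ / (2 * Mr) := min_le_right _ _
    calc h * Mr ≤ (δ / (2 * Mr)) * Mr := by gcongr
    _ = δ / 2 := by field_simp
  set csep : ℝ := h * Mr / 4 with hcsep_def
  have hcsep : 0 < csep := by positivity
  obtain ⟨t, htfin, hcov⟩ :=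
    (Metric.totallyBounded_iff.mp hscomp.totallyBounded) (csep/3) (by positivity)
  set t' := htfin.toFinset with ht'_def
  set N : ℕ := t'.card + 1 with hN_def
  -- dyadic construction
  set c : ℝ := Mr / 2 / 2 ^ N with hc_def
  have hc0 : 0 < c := by positivity
  have hlev : ∀ tt : ℕ, tt ≤ 2 ^ N → (tt : ℝ) * c ≤ Mr / 2 := by
    intro tt htt
    have h1 : (tt : ℝ) ≤ 2 ^ N := by exact_mod_cast htt
    calc (tt:ℝ) * c ≤ 2 ^ N * c := by gcongr
    _ = Mr / 2 := by rw [hc_def]; field_simp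
  have hofReal_lt : ∀ tt : ℕ, tt ≤ 2 ^ N → ENNReal.ofReal ((tt:ℝ) * c) < μ univ := by
    intro tt htt
    rw [← ENNReal.ofReal_toReal hMtop, ← hMr_def]
    rw [ENNReal.ofReal_lt_ofReal_iff hMr]
    have := hlev tt htt
    linarith
  set Z : ℕ → ℝ := fun tt => sSup {x : ℝ | μ (Iic x) ≤ ENNReal.ofReal ((tt:ℝ) * c)} with hZ_def
  have hZIio : ∀ tt : ℕ, tt ≤ 2 ^ N → μ (Iio (Z tt)) = ENNReal.ofReal ((tt:ℝ) * c) :=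
    fun tt htt => aux_measure_Iio_sSup hsupp (hofReal_lt tt htt)
  have hZmono : ∀ a b : ℕ, a ≤ b → b ≤ 2 ^ N → Z a ≤ Z b := by
    intro a b hab hb
    apply csSup_le_csSup (aux_bddAbove (hofReal_lt b hb)) ⟨0, by simp [hsupp]⟩
    intro x hx
    refine le_trans hx (ENNReal.ofReal_le_ofReal ?_)
    have : (a:ℝ) ≤ b := by exact_mod_cast hab
    nlinarith
  set B : ℕ → Set ℝ := fun tt => Ico (Z tt) (Z (tt+1)) with hB_def
  have hBmeas : ∀ tt, MeasurableSet (B tt) := fun tt => measurableSet_Ico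
  have hBμ : ∀ tt : ℕ, tt < 2 ^ N → μ (B tt) = ENNReal.ofReal c := by
    intro tt htt
    have h1 : tt + 1 ≤ 2 ^ N := htt
    have hBd : B tt = Iio (Z (tt+1)) \ Iio (Z tt) := by
      rw [hB_def]; rw [Iio_sdiff_Iio]
    rw [hBd, measure_diff (Iio_subset_Iio (hZmono tt (tt+1) (Nat.le_succ tt) h1))
      measurableSet_Iio.nullMeasurableSet (measure_ne_top μ _),
      hZIio _ h1, hZIio _ (le_of_lt htt), ← ENNReal.ofReal_sub _ (by positivity)]
    congr 1
    push_cast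
    ring
  have hBdisj : ∀ a b : ℕ, a ≠ b → a < 2 ^ N → b < 2 ^ N → Disjoint (B a) (B b) := by
    have key : ∀ a b : ℕ, a < b → b < 2 ^ N → Disjoint (B a) (B b) := by
      intro a b hab hb
      apply Set.disjoint_left.mpr
      intro x hxa hxb
      have h1 : x < Z (a+1) := hxa.2
      have h2 : Z b ≤ x := hxb.1
      have h3 : Z (a+1) ≤ Z b := hZmono _ _ hab (le_of_lt hb)
      linarith
    intro a b hab ha hb
    rcases lt_or_gt_of_ne hab with hlt | hgt
    · exact key a b hlt hb
    · exact (key b a hgt ha).symm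
  -- indexing
  have hcardV : Fintype.card (Fin N → Bool) = 2 ^ N := by simp
  set e : (Fin N → Bool) ≃ Fin (2 ^ N) := Fintype.equivFinOfCardEq hcardV with he_def
  set ι : (Fin N → Bool) → ℕ := fun v => (e v : ℕ) with hι_def
  have hι_lt : ∀ v, ι v < 2 ^ N := fun v => (e v).isLt
  have hι_inj : Function.Injective ι := fun a b hab => e.injective (Fin.ext hab)
  set A : Fin N → Set ℝ :=
    fun i => ⋃ v ∈ Finset.univ.filter (fun v : Fin N → Bool => v i = true), B (ι v) with hA_def
  have hAmeas : ∀ i, MeasurableSet (A i) :=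
    fun i => Finset.measurableSet_biUnion _ (fun v _ => hBmeas _)
  have hmemA : ∀ (x : ℝ) (v : Fin N → Bool), x ∈ B (ι v) → ∀ i, (x ∈ A i ↔ v i = true) := by
    intro x v hx i
    constructor
    · intro hxA
      rw [hA_def] at hxA
      simp only [Set.mem_iUnion, Finset.mem_filter, Finset.mem_univ, true_and] at hxA
      obtain ⟨w, hwi, hxw⟩ := hxA
      by_cases hwv : w = v
      · rw [← hwv]; exact hwi
      · exfalso
        exact Set.disjoint_left.mp
          (hBdisj (ι w) (ι v) (fun hh => hwv (hι_inj hh)) (hι_lt w) (hι_lt v)) hxw hx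
    · intro hvi
      rw [hA_def]
      simp only [Set.mem_iUnion, Finset.mem_filter, Finset.mem_univ, true_and]
      exact ⟨v, hvi, hx⟩
  set f : Fin N → Lp ℝ 1 μ :=
    fun i => indicatorConstLp 1 (hAmeas i) (measure_ne_top μ _) h with hf_def
  have hnorm_f : ∀ i, ‖f i‖ ≤ h * Mr := by
    intro i
    rw [hf_def, norm_indicatorConstLp one_ne_zero ENNReal.one_ne_top]
    simp only [ENNReal.toReal_one, div_one, Real.rpow_one, Real.norm_eq_abs]
    rw [abs_of_pos hh0]
    have : (μ (A i)).toReal ≤ Mr :=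
      ENNReal.toReal_mono hMtop (measure_mono (Set.subset_univ _))
    nlinarith [show μ.real (A i) ≤ Mr from this]
  set p : Fin N → ℝ × Lp ℝ 1 μ := fun i => ((0:ℝ), f i) with hp_def
  have hps : ∀ i, p i ∈ s := by
    intro i
    apply hball
    constructor
    · rw [Metric.mem_ball, Prod.dist_eq]
      simp only [hp_def, dist_self, dist_zero_right]
      have := hnorm_f i
      have hmax : max (0:ℝ) ‖f i‖ = ‖f i‖ := max_eq_right (norm_nonneg _)
      rw [hmax]
      linarith
    · refine ⟨⟨le_refl 0, zero_le_one⟩, ?_⟩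
      filter_upwards [indicatorConstLp_coeFn
        (p := (1:ℝ≥0∞)) (hs := hAmeas i) (hμs := measure_ne_top μ (A i)) (c := h)] with x hx
      simp only [hp_def, hf_def]
      rw [hx]
      by_cases hxA : x ∈ A i
      · rw [Set.indicator_of_mem hxA]
        exact ⟨hh0.le, hh1⟩
      · rw [Set.indicator_of_notMem hxA]
        exact ⟨le_refl 0, zero_le_one⟩
  -- separation
  have hsep : ∀ i j : Fin N, i ≠ j → csep ≤ dist (p i) (p j) := by
    intro i j hij
    have hdist : dist (p i) (p j) = ‖f i - f j‖ := by
      rw [Prod.dist_eq]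
      simp [hp_def, dist_eq_norm]
    set F := Finset.univ.filter (fun v : Fin N → Bool => v i ≠ v j) with hF_def
    set U : Set ℝ := ⋃ v ∈ F, B (ι v) with hU_def
    have hUmeas : MeasurableSet U := Finset.measurableSet_biUnion _ (fun v _ => hBmeas _)
    have hUμ : μ U = (F.card : ℝ≥0∞) * ENNReal.ofReal c := by
      rw [hU_def, measure_biUnion_finset ?hd (fun v _ => hBmeas _)]
      · rw [Finset.sum_congr rfl (fun v _ => hBμ _ (hι_lt v))]
        simp [Finset.sum_const, nsmul_eq_mul]
      case hd =>
        intro a ha b hb hab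
        exact hBdisj (ι a) (ι b) (fun hh => hab (hι_inj hh)) (hι_lt a) (hι_lt b)
    have hcard2 : F.card * 2 = 2 ^ N := aux_card_filter_ne N i j hij
    -- pointwise bound
    have hG : (⇑(f i - f j) : ℝ → ℝ) =ᵐ[μ]
        fun x => (A i).indicator (fun _ => h) x - (A j).indicator (fun _ => h) x := by
      filter_upwards [Lp.coeFn_sub (f i) (f j),
        indicatorConstLp_coeFn (p := (1:ℝ≥0∞)) (hs := hAmeas i) (hμs := measure_ne_top μ (A i)) (c := h),
        indicatorConstLp_coeFn (p := (1:ℝ≥0∞)) (hs := hAmeas j) (hμs := measure_ne_top μ (A j)) (c := h)]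
        with x h1 h2 h3
      rw [h1]
      simp only [Pi.sub_apply, hf_def]
      rw [h2, h3]
    have hkey : ENNReal.ofReal h * μ U ≤ eLpNorm (⇑(f i - f j)) 1 μ := by
      rw [eLpNorm_congr_ae hG, eLpNorm_one_eq_lintegral_enorm]
      rw [← lintegral_indicator_const hUmeas (ENNReal.ofReal h)]
      apply lintegral_mono
      intro x
      by_cases hxU : x ∈ U
      · rw [Set.indicator_of_mem hxU]
        rw [hU_def] at hxU
        simp only [Set.mem_iUnion, hF_def, Finset.mem_filter, Finset.mem_univ, true_and] at hxU
        obtain ⟨v, hvij, hxv⟩ := hxU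
        have hmem := hmemA x v hxv
        have hxAi : x ∈ A i ↔ v i = true := hmem i
        have hxAj : x ∈ A j ↔ v j = true := hmem j
        have hval : (A i).indicator (fun _ => h) x - (A j).indicator (fun _ => h) x = h ∨
            (A i).indicator (fun _ => h) x - (A j).indicator (fun _ => h) x = -h := by
          cases hvi : v i <;> cases hvj : v j
          · exact absurd (hvi.trans hvj.symm) hvij
          · right
            rw [Set.indicator_of_notMem (fun hc => by
                have := hxAi.mp hc; rw [hvi] at this; exact Bool.false_ne_true this)]
            rw [Set.indicator_of_mem (hxAj.mpr hvj)]
            ring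
          · left
            rw [Set.indicator_of_mem (hxAi.mpr hvi)]
            rw [Set.indicator_of_notMem (fun hc => by
                have := hxAj.mp hc; rw [hvj] at this; exact Bool.false_ne_true this)]
            ring
          · exact absurd (hvi.trans hvj.symm) hvij
        show (ENNReal.ofReal h : ℝ≥0∞) ≤
          (‖(A i).indicator (fun _ => h) x - (A j).indicator (fun _ => h) x‖₊ : ℝ≥0∞)
        rcases hval with hval | hval <;> rw [hval]
        · rw [← Real.enorm_eq_ofReal hh0.le]; exact (enorm_eq_nnnorm h).le
        · rw [nnnorm_neg, ← Real.enorm_eq_ofReal hh0.le]; exact (enorm_eq_nnnorm h).le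
      · rw [Set.indicator_of_notMem hxU]
        exact zero_le
    have hfin : eLpNorm (⇑(f i - f j)) 1 μ ≠ ∞ := Lp.eLpNorm_ne_top (f i - f j)
    have hlow := ENNReal.toReal_mono hfin hkey
    rw [hdist, Lp.norm_def]
    refine le_trans ?_ hlow
    rw [hUμ, ← mul_assoc, ENNReal.toReal_mul, ENNReal.toReal_mul, ENNReal.toReal_ofReal hh0.le,
      ENNReal.toReal_ofReal hc0.le, ENNReal.toReal_natCast]
    have hFc : (F.card : ℝ) * c = Mr / 4 := by
      have h2 : ((F.card * 2 : ℕ) : ℝ) = ((2 ^ N : ℕ) : ℝ) := by rw [hcard2]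
      push_cast at h2
      have h2N : (2:ℝ) ^ N ≠ 0 := by positivity
      have hFcard : (F.card : ℝ) = 2 ^ N / 2 := by linarith
      rw [hFcard, hc_def]
      field_simp
      ring
    rw [hcsep_def, mul_assoc, hFc]
    linarith
  -- pigeonhole
  have hchoice : ∀ i : Fin N, ∃ y, y ∈ t' ∧ p i ∈ Metric.ball y (csep/3) := by
    intro i
    have := hcov (hps i)
    simp only [Set.mem_iUnion] at this
    obtain ⟨y, hy, hby⟩ := this
    exact ⟨y, htfin.mem_toFinset.mpr hy, hby⟩
  choose y hyt hpy using hchoice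
  have hmaps : ∀ i : Fin N, i ∈ (Finset.univ : Finset (Fin N)) → y i ∈ t' := fun i _ => hyt i
  have hcardlt : t'.card < (Finset.univ : Finset (Fin N)).card := by
    simp [hN_def]
  obtain ⟨i, _, j, _, hij, hyij⟩ :=
    Finset.exists_ne_map_eq_of_card_lt_of_maps_to hcardlt hmaps
  have h1 := hsep i j hij
  have h2 : dist (p i) (p j) < csep/3 + csep/3 := by
    calc dist (p i) (p j) ≤ dist (p i) (y i) + dist (y i) (p j) := dist_triangle _ _ _
    _ < csep/3 + csep/3 := by
        apply add_lt_add
        · exact Metric.mem_ball.mp (hpy i)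
        · rw [hyij, dist_comm]
          exact Metric.mem_ball.mp (hpy j)
  linarith
end
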